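/- arXiv:2211.00711 — 4 statements merged into one kernel-verified Lean document; each statement's English description precedes it below -/
import Mathlib

section
/- Let (R,σ) be an assignment for (G',v₀). If σ(v₀) ≠ ⊥, then Player 1 has a winning strategy in the game 𝒢(G',v₀), i.e. the initial position v₀ is a win for the player to move. -/
/-!
Setting: `G` is a finite simple graph on `V`, bipartite with bipartition `V₁, V₂`.
The graph `G'` is obtained from `G` by adding a new vertex `v₁` adjacent to every
vertex of `V₁`, and a new vertex `v₀` adjacent only to `v₁`.  The vertices of `G'`
are encoded by `Option (Option V)`: `none` is `v₀`, `some none` is `v₁`, and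
`some (some v)` is the vertex `v` of `G`.
-/

/-- The vertex set of `G'`. -/
abbrev Vext (V : Type) : Type := Option (Option V)

/-- The added vertex `v₀`. -/
def vzero {V : Type} : Vext V := none

/-- The added vertex `v₁`. -/
def vone {V : Type} : Vext V := some none

/-- The embedding of a vertex of `G` into `G'`. -/
def emb {V : Type} (v : V) : Vext V := some (some v)

/-- The graph `G'` obtained from `G` by adding `v₁` adjacent to every vertex of `V₁`
and `v₀` adjacent only to `v₁`. -/
def extGraph {V : Type} (G : SimpleGraph V) (V1 : Set V) : SimpleGraph (Vext V) where
  Adj x y :=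
    match x, y with
    | none, some none => True
    | some none, none => True
    | some none, some (some v) => v ∈ V1
    | some (some v), some none => v ∈ V1
    | some (some u), some (some v) => G.Adj u v
    | _, _ => False
  symm := by
    constructor
    rintro (_ | (_ | x)) (_ | (_ | y)) h <;>
      first
        | exact h
        | exact h.symm
        | exact h.elim
        | trivial
  loopless := by
    constructor
    rintro (_ | (_ | x)) h
    · exact h
    · exact h
    · exact G.loopless.irrefl x h

/-- `(R, σ)` is an assignment for `(G', x₀)`: here `σ x = none` encodes `σ(x) = ⊥`. -/
structure IsAssignment {W : Type} (G' : SimpleGraph W) (x0 : W) (R : Set W)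
    (σ : W → Option W) : Prop where
  /-- `x₀ ∈ R`. -/
  mem : x0 ∈ R
  /-- `(C₁)`: for `v ∈ R`, if `σ v = u ∈ V'` then `u` is adjacent to `v`, `u ∈ R` and
  `σ u = ⊥`. -/
  C1 : ∀ v ∈ R, ∀ u, σ v = some u → G'.Adj v u ∧ u ∈ R ∧ σ u = none
  /-- `(C₂)`: for `v ∈ R`, if `σ v = ⊥` then every neighbour `u` of `v` satisfies `u ∈ R`
  and `σ u ≠ ⊥`. -/
  C2 : ∀ v ∈ R, σ v = none → ∀ u, G'.Adj v u → u ∈ R ∧ σ u ≠ none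
  /-- `(C₃)`, first half: for `v ∈ R`, `|σ⁻¹(v)| ≤ 1`. -/
  C3 : ∀ v ∈ R, {w | σ w = some v}.Subsingleton
  /-- `(C₃)`, second half: `σ⁻¹(x₀) = ∅`. -/
  C3' : ∀ w, σ w ≠ some x0

/-- Auxiliary fuelled definition of the game value of the game `𝒢(G', v₀)`.  A position
consists of the current vertex `cur` together with the list `P` of previously visited
vertices (most recent first); the player to move must choose a vertex `v` not occurring
in the position, adjacent to `cur`; a position is a win for the player to move iff some
legal move leads to a loss for the player to move there.  The fuel is (an upper bound
on) the number of unused vertices, which decreases by one at each move, so that with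
fuel equal to the number of unused vertices this is exactly the well-founded definition
of the game value. -/
def winAux {W : Type} (G' : SimpleGraph W) : ℕ → List W → W → Prop
  | 0, _, _ => False
  | n + 1, P, cur => ∃ v, v ∉ cur :: P ∧ G'.Adj cur v ∧ ¬ winAux G' n (cur :: P) v

/-- The position of `𝒢(G', v₀)` with current vertex `cur` and previously visited
vertices `P` (most recent first) is a win for the player to move. -/
def WinPos {W : Type} [Fintype W] (G' : SimpleGraph W) (P : List W) (cur : W) : Prop :=
  winAux G' {w : W | w ∉ cur :: P}.ncard P cur

/-!
Player 1 wins by always moving from the current vertex `x` to its partner `σ x`. Along the play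
every visited vertex lies in `R`, and every visited vertex `y` with `σ y = ⊥` is the partner of
a visited vertex. After Player 1 moves to `u = σ x` we have `σ u = ⊥` by (C₁), so by (C₂)
every reply `w` of Player 2 has a partner `σ w = y`, again with `σ y = ⊥`. This `y` is
unvisited: otherwise it is the partner of some visited vertex, which by (C₃) is `w`, yet `w`
was unvisited. Hence Player 1 always has a move, and as the game is finite, Player 1 wins.
-/

/-- The invariant of the strategy "move to `σ cur`" at positions where Player 1 is to move. -/
structure StrategyInv {W : Type} (R : Set W) (σ : W → Option W) (P : List W) (cur : W) :
    Prop where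
  mem_R : ∀ w ∈ cur :: P, w ∈ R
  exists_fresh_partner : ∃ u, σ cur = some u ∧ u ∉ cur :: P
  exists_partner_of_unmatched : ∀ w ∈ cur :: P, σ w = none → ∃ v ∈ cur :: P, σ v = some w

lemma ncard_notMem_cons_add_one {W : Type} [Finite W] {a : W} {L : List W} (ha : a ∉ L) :
    {z | z ∉ a :: L}.ncard + 1 = {z | z ∉ L}.ncard := by
  have hdiff : {z | z ∉ a :: L} = {z | z ∉ L} \ {a} := by
    ext z
    simp [and_comm]
  rw [hdiff, Set.ncard_sdiff_singleton_add_one ha]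

namespace StrategyInv

variable {W : Type} {G' : SimpleGraph W} {x0 : W} {R : Set W} {σ : W → Option W}
  {P : List W} {cur u w : W}

lemma start (hA : IsAssignment G' x0 R σ) (h : σ x0 ≠ none) : StrategyInv R σ [] x0 := by
  obtain ⟨u, hu⟩ := Option.ne_none_iff_exists'.1 h
  obtain ⟨hadj, -, -⟩ := hA.C1 x0 hA.mem u hu
  refine ⟨by simpa using hA.mem, ⟨u, hu, by simpa using hadj.ne.symm⟩, ?_⟩
  simp [hu]

lemma reply (hA : IsAssignment G' x0 R σ) (hinv : StrategyInv R σ P cur)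
    (hu : σ cur = some u) (hw : w ∉ u :: cur :: P) (huw : G'.Adj u w) :
    StrategyInv R σ (u :: cur :: P) w := by
  have hcurR := hinv.mem_R cur List.mem_cons_self
  obtain ⟨-, huR, hσu⟩ := hA.C1 cur hcurR u hu
  obtain ⟨hwR, hσw⟩ := hA.C2 u huR hσu w huw
  obtain ⟨y, hy⟩ := Option.ne_none_iff_exists'.1 hσw
  obtain ⟨hwy, hyR, hσy⟩ := hA.C1 w hwR y hy
  have matched : ∀ z ∈ u :: cur :: P, σ z = none → ∃ v ∈ u :: cur :: P, σ v = some z := by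
    rintro z (_ | ⟨_, hz⟩) hσz
    · exact ⟨cur, by simp, hu⟩
    · obtain ⟨v, hv, hσv⟩ := hinv.exists_partner_of_unmatched z hz hσz
      exact ⟨v, List.mem_cons_of_mem _ hv, hσv⟩
  refine ⟨?_, ⟨y, hy, ?_⟩, ?_⟩
  · rintro z (_ | ⟨_, _ | ⟨_, hz⟩⟩)
    exacts [hwR, huR, hinv.mem_R z hz]
  · rintro (_ | ⟨_, hyv⟩)
    · exact hwy.ne rfl
    · obtain ⟨v, hv, hσv⟩ := matched y hyv hσy
      exact hw (hA.C3 y hyR hσv hy ▸ hv)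
  · rintro z (_ | ⟨_, hz⟩) hσz
    · simp [hy] at hσz
    · obtain ⟨v, hv, hσv⟩ := matched z hz hσz
      exact ⟨v, List.mem_cons_of_mem _ hv, hσv⟩

lemma winAux_of_ncard_le [Finite W] (hA : IsAssignment G' x0 R σ) (n : ℕ)
    (hinv : StrategyInv R σ P cur) (hn : {z | z ∉ cur :: P}.ncard ≤ n) : winAux G' n P cur := by
  induction n using Nat.strong_induction_on generalizing P cur with
  | _ n IH =>
    obtain ⟨u, hu, hufresh⟩ := hinv.exists_fresh_partner
    obtain ⟨hadj, -, -⟩ := hA.C1 cur (hinv.mem_R cur List.mem_cons_self) u hu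
    have hcard := ncard_notMem_cons_add_one hufresh
    obtain _ | _ | k := n
    · omega
    · exact ⟨u, hufresh, hadj, id⟩
    refine ⟨u, hufresh, hadj, ?_⟩
    rintro ⟨w, hw, huw, hlose⟩
    have hcard' := ncard_notMem_cons_add_one hw
    exact hlose (IH k (by omega) (hinv.reply hA hu hw huw) (by omega))

lemma winPos [Fintype W] (hA : IsAssignment G' x0 R σ) (hinv : StrategyInv R σ P cur) :
    WinPos G' P cur :=
  hinv.winAux_of_ncard_le hA _ le_rfl

end StrategyInv

theorem stmt0_general {V : Type} [Fintype V] (G : SimpleGraph V) (V1 : Set V)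
    (R : Set (Vext V)) (σ : Vext V → Option (Vext V))
    (hA : IsAssignment (extGraph G V1) vzero R σ)
    (h : σ vzero ≠ none) :
    WinPos (extGraph G V1) [] vzero :=
  (StrategyInv.start hA h).winPos hA

/-- Let `(R, σ)` be an assignment for `(G', v₀)`.  If `σ(v₀) ≠ ⊥`, then Player 1 has a
winning strategy in the game `𝒢(G', v₀)`, i.e. the initial position `v₀` is a win for
the player to move. -/
theorem stmt0 {V : Type} [Fintype V] (G : SimpleGraph V) (V1 V2 : Set V)
    (hcover : V1 ∪ V2 = Set.univ) (hdisj : Disjoint V1 V2)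
    (hbip : ∀ ⦃u w : V⦄, G.Adj u w → (u ∈ V1 ∧ w ∈ V2) ∨ (u ∈ V2 ∧ w ∈ V1))
    (R : Set (Vext V)) (σ : Vext V → Option (Vext V))
    (hA : IsAssignment (extGraph G V1) vzero R σ)
    (h : σ vzero ≠ none) :
    WinPos (extGraph G V1) [] vzero :=
  stmt0_general G V1 R σ hA h
end

section
/- Let (R,σ) be an assignment for (G',v₀) with σ(v₀) ≠ ⊥. Then for every u ∈ V₁ one has σ(u) ∈ V₂ with u σ(u) an edge of G, and the set M = { {u, σ(u)} : u ∈ V₁ } is a matching of G covering V₁; in particular G has a matching covering V₁. -/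
/-- `M` is a matching of `G`: a set of edges of `G` that are pairwise disjoint. -/
def IsMatchingOf {V : Type} (G : SimpleGraph V) (M : Set (Sym2 V)) : Prop :=
  M ⊆ G.edgeSet ∧ M.Pairwise fun p q => ∀ x, x ∈ p → x ∉ q

/-- The set of edges `M` covers the vertex set `S`. -/
def CoversSet {V : Type} (M : Set (Sym2 V)) (S : Set V) : Prop :=
  ∀ u ∈ S, ∃ p ∈ M, u ∈ p

/-!
The only neighbour of `v₀` in `G'` is `v₁`, so `σ(v₀) = v₁`, hence `v₁ ∈ R` and `σ(v₁) = ⊥`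
by `(C₁)`. Then `(C₂)` at `v₁` puts every `u ∈ V₁` in `R` with `σ(u) ≠ ⊥`, and `σ(u) ≠ v₁`
because `v₀` is already the unique `σ`-preimage of `v₁`; so `σ(u)` is a `G`-neighbour of `u`,
which lies in `V₂`. Two vertices of `V₁` with the same image `w ∈ R` coincide by `(C₃)` at `w`.
-/

section Matching

variable {V : Type} {G : SimpleGraph V} {V1 V2 : Set V} {r : V → V → Prop}

theorem isMatchingOf_of_rel (hdisj : Disjoint V1 V2)
    (hadj : ∀ u ∈ V1, ∀ w, r u w → w ∈ V2 ∧ G.Adj u w)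
    (hfun : ∀ u w w', r u w → r u w' → w = w')
    (hinj : ∀ u ∈ V1, ∀ u' w, r u w → r u' w → u = u') :
    IsMatchingOf G {p | ∃ u ∈ V1, ∃ w, r u w ∧ p = s(u, w)} := by
  constructor
  · rintro _ ⟨u, hu, w, huw, rfl⟩
    exact (hadj u hu w huw).2
  · rintro _ ⟨u, hu, w, huw, rfl⟩ _ ⟨u', hu', w', huw', rfl⟩ hne x hx hx'
    have hw := (hadj u hu w huw).1
    have hw' := (hadj u' hu' w' huw').1
    rw [Sym2.mem_iff] at hx hx'
    rcases hx with rfl | rfl <;> rcases hx' with rfl | rfl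
    · exact hne (by rw [hfun x w w' huw huw'])
    · exact Set.disjoint_left.mp hdisj hu hw'
    · exact Set.disjoint_left.mp hdisj hu' hw
    · exact hne (by rw [hinj u hu u' x huw huw'])

theorem coversSet_of_rel (h : ∀ u ∈ V1, ∃ w, r u w) :
    CoversSet {p | ∃ u ∈ V1, ∃ w, r u w ∧ p = s(u, w)} V1 := fun u hu =>
  let ⟨w, huw⟩ := h u hu
  ⟨s(u, w), ⟨u, hu, w, huw, rfl⟩, Sym2.mem_mk_left u w⟩

end Matching

section ExtGraph

variable {V : Type} {G : SimpleGraph V} {V1 : Set V}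

theorem emb_injective : Function.Injective (emb : V → Vext V) := fun _ _ h =>
  Option.some_injective _ (Option.some_injective _ h)

theorem extGraph_adj_vzero_iff {x : Vext V} : (extGraph G V1).Adj vzero x ↔ x = vone := by
  rcases x with _ | _ | _ <;> simp [extGraph, vzero, vone]

theorem extGraph_adj_vone_emb_iff {u : V} : (extGraph G V1).Adj vone (emb u) ↔ u ∈ V1 :=
  Iff.rfl

theorem extGraph_adj_emb {u : V} {x : Vext V} (h : (extGraph G V1).Adj (emb u) x) :
    x = vone ∨ ∃ w, x = emb w ∧ G.Adj u w := by
  rcases x with _ | _ | w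
  · exact h.elim
  · exact Or.inl rfl
  · exact Or.inr ⟨w, rfl, h⟩

end ExtGraph

namespace IsAssignment

variable {V : Type} {G : SimpleGraph V} {V1 : Set V} {R : Set (Vext V)}
  {σ : Vext V → Option (Vext V)}

theorem sigma_vzero (hA : IsAssignment (extGraph G V1) vzero R σ) (h : σ vzero ≠ none) :
    σ vzero = some vone := by
  obtain ⟨x, hx⟩ := Option.ne_none_iff_exists'.mp h
  rw [hx, ← extGraph_adj_vzero_iff.mp (hA.C1 vzero hA.mem x hx).1]

theorem vone_mem (hA : IsAssignment (extGraph G V1) vzero R σ) (h : σ vzero ≠ none) :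
    vone ∈ R ∧ σ vone = none :=
  (hA.C1 vzero hA.mem vone (hA.sigma_vzero h)).2

theorem emb_mem (hA : IsAssignment (extGraph G V1) vzero R σ) (h : σ vzero ≠ none)
    {u : V} (hu : u ∈ V1) : emb u ∈ R ∧ σ (emb u) ≠ none :=
  let ⟨hvone, hσvone⟩ := hA.vone_mem h
  hA.C2 vone hvone hσvone (emb u) (extGraph_adj_vone_emb_iff.mpr hu)

theorem exists_sigma_emb (hA : IsAssignment (extGraph G V1) vzero R σ) (h : σ vzero ≠ none)
    {u : V} (hu : u ∈ V1) : ∃ w, G.Adj u w ∧ σ (emb u) = some (emb w) := by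
  obtain ⟨huR, hσu⟩ := hA.emb_mem h hu
  obtain ⟨x, hx⟩ := Option.ne_none_iff_exists'.mp hσu
  rcases extGraph_adj_emb (hA.C1 (emb u) huR x hx).1 with rfl | ⟨w, rfl, huw⟩
  · have : vzero = emb u := hA.C3 vone (hA.vone_mem h).1 (hA.sigma_vzero h) hx
    cases this
  · exact ⟨w, huw, hx⟩

theorem eq_of_sigma_emb_eq (hA : IsAssignment (extGraph G V1) vzero R σ)
    (h : σ vzero ≠ none) {u u' w : V} (hu : u ∈ V1)
    (hw : σ (emb u) = some (emb w)) (hw' : σ (emb u') = some (emb w)) : u = u' :=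
  have hwR : emb w ∈ R := (hA.C1 (emb u) (hA.emb_mem h hu).1 (emb w) hw).2.1
  emb_injective (hA.C3 (emb w) hwR hw hw')

end IsAssignment

theorem stmt2_general {V : Type} (G : SimpleGraph V) (V1 V2 : Set V)
    (hdisj : Disjoint V1 V2)
    (hbip : ∀ ⦃u w : V⦄, G.Adj u w → (u ∈ V1 ∧ w ∈ V2) ∨ (u ∈ V2 ∧ w ∈ V1))
    (R : Set (Vext V)) (σ : Vext V → Option (Vext V))
    (hA : IsAssignment (extGraph G V1) vzero R σ)
    (h : σ vzero ≠ none) :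
    (∀ u ∈ V1, ∃ w ∈ V2, G.Adj u w ∧ σ (emb u) = some (emb w)) ∧
    IsMatchingOf G {p | ∃ u ∈ V1, ∃ w : V, σ (emb u) = some (emb w) ∧ p = s(u, w)} ∧
    CoversSet {p | ∃ u ∈ V1, ∃ w : V, σ (emb u) = some (emb w) ∧ p = s(u, w)} V1 ∧
    ∃ M : Set (Sym2 V), IsMatchingOf G M ∧ CoversSet M V1 := by
  have hfun : ∀ u w w', σ (emb u) = some (emb w) → σ (emb u) = some (emb w') → w = w' :=
    fun _ _ _ hw hw' => emb_injective (Option.some_injective _ (hw.symm.trans hw'))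
  have hσ : ∀ u ∈ V1, ∃ w ∈ V2, G.Adj u w ∧ σ (emb u) = some (emb w) := by
    intro u hu
    obtain ⟨w, huw, hw⟩ := hA.exists_sigma_emb h hu
    have hw2 : w ∈ V2 :=
      ((hbip huw).resolve_right fun h2 => Set.disjoint_left.mp hdisj hu h2.1).2
    exact ⟨w, hw2, huw, hw⟩
  have hadj : ∀ u ∈ V1, ∀ w, σ (emb u) = some (emb w) → w ∈ V2 ∧ G.Adj u w :=
    fun u hu w hw =>
      let ⟨w', hw2, huw, hw'⟩ := hσ u hu
      hfun u w' w hw' hw ▸ ⟨hw2, huw⟩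
  have hM := isMatchingOf_of_rel hdisj hadj hfun
    fun _ hu _ _ hw hw' => hA.eq_of_sigma_emb_eq h hu hw hw'
  have hC := coversSet_of_rel fun u hu =>
    let ⟨w, _, _, hw⟩ := hσ u hu
    ⟨w, hw⟩
  exact ⟨hσ, hM, hC, _, hM, hC⟩

/-- Let `(R, σ)` be an assignment for `(G', v₀)` with `σ(v₀) ≠ ⊥`.  Then for every
`u ∈ V₁` one has `σ(u) ∈ V₂` with `u σ(u)` an edge of `G`, and the set
`M = { {u, σ(u)} : u ∈ V₁ }` is a matching of `G` covering `V₁`; in particular `G`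
has a matching covering `V₁`. -/
theorem stmt2 {V : Type} [Fintype V] (G : SimpleGraph V) (V1 V2 : Set V)
    (hcover : V1 ∪ V2 = Set.univ) (hdisj : Disjoint V1 V2)
    (hbip : ∀ ⦃u w : V⦄, G.Adj u w → (u ∈ V1 ∧ w ∈ V2) ∨ (u ∈ V2 ∧ w ∈ V1))
    (R : Set (Vext V)) (σ : Vext V → Option (Vext V))
    (hA : IsAssignment (extGraph G V1) vzero R σ)
    (h : σ vzero ≠ none) :
    (∀ u ∈ V1, ∃ w ∈ V2, G.Adj u w ∧ σ (emb u) = some (emb w)) ∧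
    IsMatchingOf G {p | ∃ u ∈ V1, ∃ w : V, σ (emb u) = some (emb w) ∧ p = s(u, w)} ∧
    CoversSet {p | ∃ u ∈ V1, ∃ w : V, σ (emb u) = some (emb w) ∧ p = s(u, w)} V1 ∧
    ∃ M : Set (Sym2 V), IsMatchingOf G M ∧ CoversSet M V1 :=
  stmt2_general G V1 V2 hdisj hbip R σ hA h
end

section
/- Let n be the number of vertices of G'. Consider any (finite or infinite) execution of the transition system starting from the initial state, and for a vertex v ∈ V' let S_v be the set of steps of the execution that are a deletion or an introduction of a pair containing v. Then |S_v| ≤ 2n for every v ∈ V'. -/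
/-!
The transition system underlying Algorithm 1.  A state consists of the current path
`P` (stored as a list in *reverse* order, so that the head of the list is the last
vertex `v_k` of the path), the set `R` of reached vertices, and the two maps
`σ, τ : V' → V' ∪ {⊥}` (with `⊥` encoded by `none`).
-/

/-- A state of the transition system. -/
structure AlgState (W : Type) where
  /-- The current path `v₀ v₁ … v_k`, stored in reverse order (head `= v_k`). -/
  P : List W
  /-- The set of reached vertices. -/
  R : Set W
  /-- The map `σ`. -/
  σ : W → Option W
  /-- The map `τ`. -/
  τ : W → Option W

/-- The initial state: `P = x₀ x₁`, `R = {x₀, x₁}`, `σ ≡ ⊥`, `τ ≡ ⊥`. -/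
def initState {W : Type} (x0 x1 : W) : AlgState W :=
  ⟨[x1, x0], {x0, x1}, fun _ => none, fun _ => none⟩

/-- The labelled transition relation of the system, for a graph `G'`.  Steps are only
possible from states whose path `P = v₀ v₁ … v_k` has `k ≥ 1` (at least two vertices).
With `Z = { u ∈ V' − V(P) : u v_k ∈ E', σ(u) = ⊥ }`: if `Z = ∅`, the step is a
*deletion* of the pair `(v_{k−1}, v_k)` (label `(v_{k−1}, some v_k)`); if `Z ≠ ∅`, the
step chooses `z ∈ Z` and is an *introduction* of the pair `(z, w)` where `w = τ(z)`
(label `(z, τ z)`). -/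
inductive LStep {W : Type} [DecidableEq W] (G' : SimpleGraph W) :
    W × Option W → AlgState W → AlgState W → Prop
  | del (vk vk1 : W) (rest : List W) (R : Set W) (σ τ : W → Option W)
      (hZ : ∀ u, u ∉ vk :: vk1 :: rest → G'.Adj u vk → σ u ≠ none) :
      LStep G' (vk1, some vk)
        ⟨vk :: vk1 :: rest, R, σ, τ⟩
        ⟨rest, R,
          Function.update (Function.update σ vk1 (some vk)) vk none,
          Function.update (Function.update τ vk (some vk1)) vk1 none⟩
  | intro_bot (vk : W) (rest : List W) (R : Set W) (σ τ : W → Option W) (z : W)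
      (hrest : rest ≠ [])
      (hz : z ∉ vk :: rest) (hadj : G'.Adj z vk) (hσ : σ z = none) (hτ : τ z = none) :
      LStep G' (z, none)
        ⟨vk :: rest, R, σ, τ⟩
        ⟨z :: vk :: rest, insert z R, σ, τ⟩
  | intro_pair (vk : W) (rest : List W) (R : Set W) (σ τ : W → Option W) (z w : W)
      (hrest : rest ≠ [])
      (hz : z ∉ vk :: rest) (hadj : G'.Adj z vk) (hσ : σ z = none) (hτ : τ z = some w) :
      LStep G' (z, some w)
        ⟨vk :: rest, R, σ, τ⟩
        ⟨w :: z :: vk :: rest, insert z R, σ, τ⟩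

/-- The (unlabelled) transition relation. -/
def Step {W : Type} [DecidableEq W] (G' : SimpleGraph W) (s s' : AlgState W) : Prop :=
  ∃ l, LStep G' l s s'

/-- `{u, v}` is a match of the tuple `t = (σ, τ)`. -/
def IsMatchPair {W : Type} (σ τ : W → Option W) (u v : W) : Prop :=
  σ u = some v ∧ τ u = none ∧ σ v = none ∧ τ v = some u

/-- The tuple `t = (σ, τ)` is valid for `(Q, R)`: (1) every `u` with `σ(u) ≠ ⊥` or
`τ(u) ≠ ⊥` belongs to `R`; (2) `Q` is a union of pairwise disjoint matches of `t`. -/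
def ValidTuple {W : Type} (σ τ : W → Option W) (Q R : Set W) : Prop :=
  (∀ u, (σ u ≠ none ∨ τ u ≠ none) → u ∈ R) ∧
  ∃ pairs : Set (W × W),
    (∀ p ∈ pairs, IsMatchPair σ τ p.1 p.2) ∧
    pairs.PairwiseDisjoint (fun p => ({p.1, p.2} : Set W)) ∧
    Q = ⋃ p ∈ pairs, ({p.1, p.2} : Set W)

/-- The deletion/introduction pair recorded by the label `l` contains the vertex `v`. -/
def PairContains {W : Type} (l : W × Option W) (v : W) : Prop :=
  l.1 = v ∨ l.2 = some v

/-!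
A step of `S_v` deletes a pair containing `v` if `v` is on the path, and otherwise introduces
`v` onto it. Fix a 2-colouring of the bipartite graph `G'`. Introductions `(z, τ z)` and
deletions keep the colour of the last path vertex. After the deletion of `(v_{k-1}, v_k) ∋ v`
the last vertex has the colour of `v_k`, while `v` can only come back through an introduction
of `z = v_k` (directly, or with `v = τ(v_k)`), which requires a last vertex of the other colour.
Hence between a deletion in `S_v` and the next step of `S_v` there is an introduction with
`τ(z) = ⊥`. Such a step introduces a vertex never touched before, other than `v₀, v₁`, so there
are at most `n - 2` of them, and `2 · #(introductions with τ(z) = ⊥ so far) + [v ∈ P]` strictly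
increases along `S_v` while staying below `2n - 2`.
-/

theorem SimpleGraph.Coloring.bool_eq_of_adj_of_adj {V : Type*} {G : SimpleGraph V}
    (c : G.Coloring Bool) {x y z : V} (hxy : G.Adj x y) (hyz : G.Adj y z) : c x = c z := by
  have h₁ := c.valid hxy
  have h₂ := c.valid hyz
  revert h₁ h₂
  cases c x <;> cases c y <;> cases c z <;> decide

theorem Nat.strictMonoOn_of_consecutive {T : Set ℕ} {f : ℕ → ℕ}
    (h : ∀ a ∈ T, ∀ b ∈ T, a < b → (∀ t ∈ T, t ≤ a ∨ b ≤ t) → f a < f b) :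
    StrictMonoOn f T := by
  suffices ∀ n a b, b - a = n → a ∈ T → b ∈ T → a < b → f a < f b from
    fun a ha b hb hab => this _ a b rfl ha hb hab
  intro n
  induction n using Nat.strong_induction_on with
  | _ n ih =>
    intro a b hn ha hb hab
    by_cases hmid : ∃ t ∈ T, a < t ∧ t < b
    · obtain ⟨t, ht, hat, htb⟩ := hmid
      exact (ih _ (by omega) a t rfl ha ht hat).trans (ih _ (by omega) t b rfl ht hb htb)
    · push Not at hmid
      exact h a ha b hb hab fun t ht => (le_or_gt t a).imp_right (hmid t ht)

theorem Function.update_update_eq_some {α β : Type*} [DecidableEq α] {f : α → Option β}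
    {a b x : α} {c y : β} (hab : a ≠ b) :
    Function.update (Function.update f a (some c)) b none x = some y ↔
      (x = a ∧ y = c) ∨ (x ≠ a ∧ x ≠ b ∧ f x = some y) := by
  by_cases hb : x = b
  · subst hb; simp [hab.symm]
  by_cases ha : x = a
  · subst ha; simp [hb, eq_comm]
  simp [ha, hb]

namespace AlgState

variable {W : Type} {G' : SimpleGraph W}

/-- Off the path, `σ` and `τ` pair vertices into matches `σ x = y`, `τ y = x`; on the path
(stored reversed), `σ x = y` only if `y` is the vertex just before `x`. -/
structure Invariant (G' : SimpleGraph W) (s : AlgState W) : Prop where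
  nodup : s.P.Nodup
  isChain : s.P.IsChain G'.Adj
  sigma_tau {x y : W} : s.σ x = some y → s.τ y = some x
  sigma_sigma {x y : W} : s.σ x = some y → s.σ y = none
  sigma_mem {x y : W} : s.σ x = some y → x ∈ s.P →
    ∃ i : ℕ, s.P[i]? = some x ∧ s.P[i + 1]? = some y
  sigma_not_mem {x y : W} : s.σ x = some y → x ∉ s.P → y ∉ s.P
  tau_adj {x y : W} : s.τ x = some y → G'.Adj x y
  tau_sigma {x y : W} : s.τ x = some y → s.σ x = none → x ∉ s.P → s.σ y = some x

def Touched (s : AlgState W) (z : W) : Prop :=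
  z ∈ s.P ∨ s.σ z ≠ none ∨ s.τ z ≠ none

theorem invariant_initState {x0 x1 : W} (h : G'.Adj x1 x0) :
    (initState x0 x1).Invariant G' := by
  refine ⟨by simp [initState, h.ne], by simp [initState, h], ?_, ?_, ?_, ?_, ?_, ?_⟩ <;>
    simp [initState]

namespace Invariant

variable {s : AlgState W} {a b x y : W} {l : List W}

theorem index_eq (hs : s.Invariant G') {i j : ℕ} (hi : s.P[i]? = some x)
    (hj : s.P[j]? = some x) : i = j :=
  (List.getElem?_inj (List.getElem?_eq_some_iff.mp hi).1 hs.nodup).mp (hi.trans hj.symm)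

theorem sigma_ne_some_head (hs : s.Invariant G') (hP : s.P = a :: l) (x : W) :
    s.σ x ≠ some a := by
  intro hx
  by_cases hxP : x ∈ s.P
  · obtain ⟨i, -, hi⟩ := hs.sigma_mem hx hxP
    have := hs.index_eq hi (by simp [hP] : s.P[0]? = some a)
    omega
  · exact hs.sigma_not_mem hx hxP (by simp [hP])

theorem eq_head_of_sigma_eq_some_second (hs : s.Invariant G') (hP : s.P = a :: b :: l)
    (hx : s.σ x = some b) : x = a := by
  have hxP : x ∈ s.P := by
    by_contra hxP
    exact hs.sigma_not_mem hx hxP (by simp [hP])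
  obtain ⟨i, hi, hi1⟩ := hs.sigma_mem hx hxP
  obtain rfl : i = 0 := by
    have := hs.index_eq hi1 (by simp [hP] : s.P[1]? = some b)
    omega
  simpa [hP] using hi.symm

theorem sigma_head_eq_some (hs : s.Invariant G') (hP : s.P = a :: b :: l)
    (hy : s.σ a = some y) : y = b := by
  obtain ⟨i, hi, hi1⟩ := hs.sigma_mem hy (by simp [hP])
  obtain rfl : i = 0 := hs.index_eq hi (by simp [hP])
  simpa [hP] using hi1.symm

theorem mem_of_sigma_second (hs : s.Invariant G') (hP : s.P = a :: b :: l)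
    (hy : s.σ b = some y) : y ∈ l := by
  obtain ⟨i, hi, hi1⟩ := hs.sigma_mem hy (by simp [hP])
  obtain rfl : i = 1 := hs.index_eq hi (by simp [hP])
  exact List.mem_of_getElem? (by simpa [hP] using hi1)

theorem sigma_partner (hs : s.Invariant G') (hτ : s.τ x = some y) (hσ : s.σ x = none)
    (hx : x ∉ s.P) : s.σ y = some x ∧ y ∉ s.P := by
  have hy := hs.tau_sigma hτ hσ hx
  refine ⟨hy, fun hyP => hx ?_⟩
  obtain ⟨i, -, hi⟩ := hs.sigma_mem hy hyP
  exact List.mem_of_getElem? hi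

theorem intro_bot {vk z : W} {rest : List W} {R : Set W} {σ τ : W → Option W}
    (hs : Invariant G' ⟨vk :: rest, R, σ, τ⟩) (hz : z ∉ vk :: rest) (hadj : G'.Adj z vk)
    (hσ : σ z = none) (hτ : τ z = none) :
    Invariant G' ⟨z :: vk :: rest, insert z R, σ, τ⟩ := by
  refine ⟨List.nodup_cons.mpr ⟨hz, hs.nodup⟩, List.isChain_cons_cons.mpr ⟨hadj, hs.isChain⟩,
    hs.sigma_tau, hs.sigma_sigma, fun hxy hx => ?_, fun {x y} hxy hx => ?_, hs.tau_adj,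
    fun hxy hσx hx => hs.tau_sigma hxy hσx (List.not_mem_of_not_mem_cons hx)⟩
  · rcases List.mem_cons.mp hx with rfl | hx
    · simp [hσ] at hxy
    · obtain ⟨i, hi, hi1⟩ := hs.sigma_mem hxy hx
      exact ⟨i + 1, by simpa using hi, by simpa using hi1⟩
  · have hyz : y ≠ z := fun h => by simpa [h, hτ] using hs.sigma_tau hxy
    exact List.not_mem_cons_of_ne_of_not_mem hyz
      (hs.sigma_not_mem hxy (List.not_mem_of_not_mem_cons hx))

theorem intro_pair {vk z w : W} {rest : List W} {R : Set W} {σ τ : W → Option W}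
    (hs : Invariant G' ⟨vk :: rest, R, σ, τ⟩) (hz : z ∉ vk :: rest) (hadj : G'.Adj z vk)
    (hσ : σ z = none) (hτ : τ z = some w) :
    Invariant G' ⟨w :: z :: vk :: rest, insert z R, σ, τ⟩ := by
  obtain ⟨hw, hwP⟩ := hs.sigma_partner hτ hσ hz
  have hzw : G'.Adj z w := hs.tau_adj hτ
  refine ⟨List.nodup_cons.mpr ⟨List.not_mem_cons_of_ne_of_not_mem hzw.ne.symm hwP,
      List.nodup_cons.mpr ⟨hz, hs.nodup⟩⟩,
    List.isChain_cons_cons.mpr ⟨hzw.symm, List.isChain_cons_cons.mpr ⟨hadj, hs.isChain⟩⟩,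
    hs.sigma_tau, hs.sigma_sigma, fun hxy hx => ?_, fun {x y} hxy hx => ?_, hs.tau_adj,
    fun hxy hσx hx => hs.tau_sigma hxy hσx
      (List.not_mem_of_not_mem_cons (List.not_mem_of_not_mem_cons hx))⟩
  · rcases List.mem_cons.mp hx with rfl | hx
    · obtain rfl : _ = z := Option.some.inj (hxy.symm.trans hw)
      exact ⟨0, by simp, by simp⟩
    rcases List.mem_cons.mp hx with rfl | hx
    · simp [hσ] at hxy
    · obtain ⟨i, hi, hi1⟩ := hs.sigma_mem hxy hx
      exact ⟨i + 2, by simpa using hi, by simpa using hi1⟩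
  · simp only [List.mem_cons, not_or] at hx
    have hyw : y ≠ w := fun h =>
      Option.some_ne_none z (hw.symm.trans (h ▸ hs.sigma_sigma hxy))
    have hyz : y ≠ z := fun h => hx.1 (by simpa [h, hτ] using (hs.sigma_tau hxy).symm)
    exact List.not_mem_cons_of_ne_of_not_mem hyw (List.not_mem_cons_of_ne_of_not_mem hyz
      (hs.sigma_not_mem hxy (by simp [hx.2.2])))

open Function in
theorem del [DecidableEq W] {vk vk1 : W} {rest : List W} {R : Set W} {σ τ : W → Option W}
    (hs : Invariant G' ⟨vk :: vk1 :: rest, R, σ, τ⟩) :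
    Invariant G' ⟨rest, R, update (update σ vk1 (some vk)) vk none,
      update (update τ vk (some vk1)) vk1 none⟩ := by
  have hP : (⟨vk :: vk1 :: rest, R, σ, τ⟩ : AlgState W).P = vk :: vk1 :: rest := rfl
  have hA : G'.Adj vk vk1 := (List.isChain_cons_cons.mp hs.isChain).1
  have hnd := hs.nodup
  simp only [List.nodup_cons, List.mem_cons, not_or] at hnd
  obtain ⟨⟨-, hvk⟩, hvk1, hrest⟩ := hnd
  have hσ' {x y : W} : update (update σ vk1 (some vk)) vk none x = some y ↔
      (x = vk1 ∧ y = vk) ∨ (x ≠ vk1 ∧ x ≠ vk ∧ σ x = some y) :=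
    update_update_eq_some hA.ne.symm
  have hτ' {x y : W} : update (update τ vk (some vk1)) vk1 none x = some y ↔
      (x = vk ∧ y = vk1) ∨ (x ≠ vk ∧ x ≠ vk1 ∧ τ x = some y) :=
    update_update_eq_some hA.ne
  have hy {x y : W} (hxy : σ x = some y) (hxk : x ≠ vk) : y ≠ vk ∧ y ≠ vk1 :=
    ⟨fun h => hs.sigma_ne_some_head hP x (h ▸ hxy),
      fun h => hxk (hs.eq_head_of_sigma_eq_some_second hP (h ▸ hxy))⟩
  refine ⟨hrest, hs.isChain.tail.tail, fun hxy => ?_, fun hxy => ?_, fun hxy hx => ?_,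
    fun hxy hx => ?_, fun hxy => ?_, fun {x y} hxy hσx hx => ?_⟩
  · rcases hσ'.mp hxy with ⟨rfl, rfl⟩ | ⟨-, hxk, hxy⟩
    · exact hτ'.mpr (Or.inl ⟨rfl, rfl⟩)
    · obtain ⟨hyk, hyk1⟩ := hy hxy hxk
      exact hτ'.mpr (Or.inr ⟨hyk, hyk1, hs.sigma_tau hxy⟩)
  · rcases hσ'.mp hxy with ⟨-, rfl⟩ | ⟨-, hxk, hxy⟩
    · exact update_self _ _ _
    · obtain ⟨hyk, hyk1⟩ := hy hxy hxk
      simp only [update_of_ne hyk, update_of_ne hyk1]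
      exact hs.sigma_sigma hxy
  · rcases hσ'.mp hxy with ⟨rfl, -⟩ | ⟨hx1, hxk, hxy⟩
    · exact absurd hx hvk1
    obtain ⟨_ | _ | i, hi, hi1⟩ := hs.sigma_mem hxy (by simp [hx])
    · exact absurd (by simpa using hi.symm) hxk
    · exact absurd (by simpa using hi.symm) hx1
    · exact ⟨i, by simpa using hi, by simpa using hi1⟩
  · rcases hσ'.mp hxy with ⟨-, rfl⟩ | ⟨hx1, hxk, hxy⟩
    · exact hvk
    · have := hs.sigma_not_mem hxy (by simp [hx, hx1, hxk])
      simp only [List.mem_cons, not_or] at this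
      exact this.2.2
  · rcases hτ'.mp hxy with ⟨rfl, rfl⟩ | ⟨-, -, hxy⟩
    · exact hA
    · exact hs.tau_adj hxy
  · rcases hτ'.mp hxy with ⟨rfl, rfl⟩ | ⟨hxk, hx1, hxy⟩
    · exact hσ'.mpr (Or.inl ⟨rfl, rfl⟩)
    simp only [update_of_ne hxk, update_of_ne hx1] at hσx
    have hyx := hs.tau_sigma hxy hσx (by simp [hx, hx1, hxk])
    have hyk : y ≠ vk := fun h => hx1 (hs.sigma_head_eq_some hP (h ▸ hyx))
    have hyk1 : y ≠ vk1 := fun h => hx (hs.mem_of_sigma_second hP (h ▸ hyx))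
    exact hσ'.mpr (Or.inr ⟨hyk1, hyk, hyx⟩)

end Invariant

end AlgState

namespace LStep

open AlgState

variable {W : Type} [DecidableEq W] {G' : SimpleGraph W} {l : W × Option W}
  {s s' : AlgState W} {v : W}

theorem invariant (h : LStep G' l s s') (hs : s.Invariant G') : s'.Invariant G' := by
  cases h with
  | del => exact hs.del
  | intro_bot _ _ _ _ _ _ _ hz hadj hσ hτ => exact hs.intro_bot hz hadj hσ hτ
  | intro_pair _ _ _ _ _ _ _ _ hz hadj hσ hτ => exact hs.intro_pair hz hadj hσ hτ

theorem P_ne_nil (h : LStep G' l s s') : s.P ≠ [] := by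
  cases h <;> simp

theorem touched (h : LStep G' l s s') (hs : s.Invariant G') {z : W} (hz : s.Touched z) :
    s'.Touched z := by
  cases h with
  | del vk vk1 =>
    have hne : vk ≠ vk1 := (List.isChain_cons_cons.mp hs.isChain).1.ne
    by_cases h1 : z = vk
    · subst h1
      exact Or.inr (Or.inr (by simp [hne]))
    by_cases h2 : z = vk1
    · subst h2
      exact Or.inr (Or.inl (by simp [hne.symm]))
    simpa [Touched, Function.update_of_ne h1, Function.update_of_ne h2, h1, h2] using hz
  | intro_bot => exact hz.imp (List.mem_cons_of_mem _) id
  | intro_pair => exact hz.imp (fun h => List.mem_cons_of_mem _ (List.mem_cons_of_mem _ h)) id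

theorem not_touched_fst (h : LStep G' l s s') (hl : l.2 = none) : ¬ s.Touched l.1 := by
  cases h with
  | intro_bot _ _ _ _ _ _ _ hz _ hσ hτ => simp [Touched, hz, hσ, hτ]
  | _ => simp at hl

theorem touched_fst (h : LStep G' l s s') (hl : l.2 = none) : s'.Touched l.1 := by
  cases h with
  | intro_bot => simp [Touched]
  | _ => simp at hl

theorem frozen (h : LStep G' l s s') (hv : ¬ PairContains l v) :
    s'.σ v = s.σ v ∧ s'.τ v = s.τ v ∧ (v ∈ s'.P ↔ v ∈ s.P) := by
  simp only [PairContains, not_or] at hv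
  cases h with
  | del vk vk1 =>
    have h1 : v ≠ vk1 := Ne.symm hv.1
    have h2 : v ≠ vk := fun h => hv.2 (by rw [h])
    simp [h1, h2]
  | intro_bot => simp [Ne.symm hv.1]
  | intro_pair _ _ _ _ _ _ w =>
    have h2 : v ≠ w := fun h => hv.2 (by rw [h])
    simp [Ne.symm hv.1, h2]

theorem map_head_eq (h : LStep G' l s s') (hs : s.Invariant G') (c : G'.Coloring Bool)
    (hl : l.2 ≠ none) (hP' : s'.P ≠ []) : s'.P.head?.map c = s.P.head?.map c := by
  cases h with
  | del =>
    obtain ⟨a, r, rfl⟩ := List.exists_cons_of_ne_nil hP'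
    have hch := hs.isChain
    simp only [List.isChain_cons_cons] at hch
    simp [c.bool_eq_of_adj_of_adj hch.2.1.symm hch.1.symm]
  | intro_bot => simp at hl
  | intro_pair _ _ _ _ _ _ _ _ _ hadj _ hτ =>
    simp [c.bool_eq_of_adj_of_adj (hs.tau_adj hτ).symm hadj]

theorem of_mem (h : LStep G' l s s') (hs : s.Invariant G') (hv : PairContains l v)
    (hvP : v ∈ s.P) :
    l.2 ≠ none ∧ v ∉ s'.P ∧ ∃ a, s.P.head? = some a ∧ (s'.σ v).getD v = a := by
  cases h with
  | del vk vk1 rest =>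
    have hne : vk ≠ vk1 := (List.isChain_cons_cons.mp hs.isChain).1.ne
    have hnd := hs.nodup
    simp only [List.nodup_cons, List.mem_cons, not_or] at hnd
    simp only [PairContains, Option.some.injEq] at hv
    rcases hv with rfl | rfl
    · exact ⟨by simp, hnd.2.1, _, rfl, by simp [hne.symm]⟩
    · exact ⟨by simp, hnd.1.2, _, rfl, by simp⟩
  | intro_bot _ _ _ _ _ _ _ hz =>
    simp only [PairContains, reduceCtorEq, or_false] at hv
    exact absurd (hv ▸ hvP) hz
  | intro_pair _ _ _ _ _ _ _ _ hz _ hσ hτ =>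
    simp only [PairContains, Option.some.injEq] at hv
    rcases hv with rfl | rfl
    · exact absurd hvP hz
    · exact absurd hvP (hs.sigma_partner hτ hσ hz).2

theorem mem_of_not_mem (h : LStep G' l s s') (hv : PairContains l v) (hvP : v ∉ s.P) :
    v ∈ s'.P := by
  cases h with
  | del =>
    simp only [PairContains, Option.some.injEq] at hv
    rcases hv with rfl | rfl <;> simp at hvP
  | intro_bot =>
    simp only [PairContains, reduceCtorEq, or_false] at hv
    simp [hv]
  | intro_pair =>
    simp only [PairContains, Option.some.injEq] at hv
    rcases hv with rfl | rfl <;> simp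

theorem adj_head_of_not_mem (h : LStep G' l s s') (hs : s.Invariant G')
    (hv : PairContains l v) (hvP : v ∉ s.P) (ht : s.Touched v) :
    ∃ a, s.P.head? = some a ∧ G'.Adj ((s.σ v).getD v) a := by
  have hστ : s.σ v ≠ none ∨ s.τ v ≠ none := ht.resolve_left hvP
  cases h with
  | del =>
    simp only [PairContains, Option.some.injEq] at hv
    rcases hv with rfl | rfl <;> simp at hvP
  | intro_bot _ _ _ _ _ _ _ _ _ hσ hτ =>
    simp only [PairContains, reduceCtorEq, or_false] at hv
    simp [← hv, hσ, hτ] at hστ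
  | intro_pair _ _ _ _ _ _ _ _ hz hadj hσ hτ =>
    refine ⟨_, rfl, ?_⟩
    simp only [PairContains, Option.some.injEq] at hv
    rcases hv with rfl | rfl
    · simpa [hσ] using hadj
    · have hw := (hs.sigma_partner hτ hσ hz).1
      simp only at hw
      simpa [hw] using hadj

end LStep

structure IsRun {W : Type} [DecidableEq W] (G' : SimpleGraph W) (x0 x1 : W) (D : Set ℕ)
    (seq : ℕ → AlgState W) (lab : ℕ → W × Option W) : Prop where
  down : ∀ ⦃i j : ℕ⦄, i ≤ j → j ∈ D → i ∈ D
  init : seq 0 = initState x0 x1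
  step : ∀ i ∈ D, LStep G' (lab i) (seq i) (seq (i + 1))

noncomputable def introBotCount {W : Type} (lab : ℕ → W × Option W) (e : ℕ) : ℕ :=
  {t | t < e ∧ (lab t).2 = none}.ncard

theorem introBotCount_mono {W : Type} {lab : ℕ → W × Option W} {e e' : ℕ} (h : e ≤ e') :
    introBotCount lab e ≤ introBotCount lab e' :=
  Set.ncard_le_ncard (fun _ ht => ⟨ht.1.trans_le h, ht.2⟩)
    ((Set.finite_Iio e').subset fun _ ht => ht.1)

theorem introBotCount_lt {W : Type} {lab : ℕ → W × Option W} {e t e' : ℕ} (het : e ≤ t)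
    (hte' : t < e') (hl : (lab t).2 = none) : introBotCount lab e < introBotCount lab e' :=
  Set.ncard_lt_ncard
    ⟨fun _ hs => ⟨hs.1.trans_le (het.trans hte'.le), hs.2⟩,
      fun hsub => (hsub ⟨hte', hl⟩).1.not_ge het⟩
    ((Set.finite_Iio e').subset fun _ ht => ht.1)

namespace IsRun

open AlgState

variable {W : Type} [DecidableEq W] {G' : SimpleGraph W} {x0 x1 : W} {D : Set ℕ}
  {seq : ℕ → AlgState W} {lab : ℕ → W × Option W} {v : W} {e e' : ℕ}

theorem invariant (hr : IsRun G' x0 x1 D seq lab) (h01 : G'.Adj x1 x0) {t : ℕ} (ht : t ∈ D) :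
    (seq t).Invariant G' := by
  induction t with
  | zero => exact hr.init ▸ invariant_initState h01
  | succ t ih =>
    have htD : t ∈ D := hr.down t.le_succ ht
    exact (hr.step t htD).invariant (ih htD)

theorem touched_mono (hr : IsRun G' x0 x1 D seq lab) (h01 : G'.Adj x1 x0) {a b : ℕ} {z : W}
    (hab : a ≤ b) (hb : b ∈ D) (ha : (seq a).Touched z) : (seq b).Touched z := by
  induction b, hab using Nat.le_induction with
  | base => exact ha
  | succ n _ ih =>
    have hn : n ∈ D := hr.down n.le_succ hb
    exact (hr.step n hn).touched (hr.invariant h01 hn) (ih hn)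

theorem frozen (hr : IsRun G' x0 x1 D seq lab) {a b : ℕ} (hab : a ≤ b) (hb : b ∈ D)
    (hv : ∀ t, a ≤ t → t < b → ¬ PairContains (lab t) v) :
    (seq b).σ v = (seq a).σ v ∧ (seq b).τ v = (seq a).τ v ∧
      (v ∈ (seq b).P ↔ v ∈ (seq a).P) := by
  induction b, hab using Nat.le_induction with
  | base => exact ⟨rfl, rfl, Iff.rfl⟩
  | succ n hn ih =>
    have hnD : n ∈ D := hr.down n.le_succ hb
    obtain ⟨h₁, h₂, h₃⟩ := ih hnD fun t ht ht' => hv t ht (ht'.trans n.lt_succ_self)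
    obtain ⟨g₁, g₂, g₃⟩ := (hr.step n hnD).frozen (hv n hn n.lt_succ_self)
    exact ⟨g₁.trans h₁, g₂.trans h₂, g₃.trans h₃⟩

theorem map_head_eq (hr : IsRun G' x0 x1 D seq lab) (h01 : G'.Adj x1 x0)
    (c : G'.Coloring Bool) {a b : ℕ} (hab : a ≤ b) (hb : b ∈ D)
    (hl : ∀ t, a ≤ t → t < b → (lab t).2 ≠ none) :
    (seq b).P.head?.map c = (seq a).P.head?.map c := by
  induction b, hab using Nat.le_induction with
  | base => rfl
  | succ n hn ih =>
    have hnD : n ∈ D := hr.down n.le_succ hb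
    rw [(hr.step n hnD).map_head_eq (hr.invariant h01 hnD) c (hl n hn n.lt_succ_self)
      (hr.step (n + 1) hb).P_ne_nil]
    exact ih hnD fun t ht ht' => hl t ht (ht'.trans n.lt_succ_self)

theorem introBotCount_le [Fintype W] (hr : IsRun G' x0 x1 D seq lab) (h01 : G'.Adj x1 x0)
    (he : e ∈ D) : introBotCount lab e ≤ Fintype.card W - 2 := by
  have hfresh {t t' : ℕ} (ht : t < e) (hl : (lab t).2 = none) (ht' : t' ≤ t) :
      ¬ (seq t').Touched (lab t).1 := fun htouch =>
    have htD : t ∈ D := hr.down ht.le he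
    (hr.step t htD).not_touched_fst hl (hr.touched_mono h01 ht' htD htouch)
  have hne {t t' : ℕ} (htt' : t < t') (ht : (lab t).2 = none) (ht' : t' < e)
      (hl' : (lab t').2 = none) : (lab t).1 ≠ (lab t').1 := fun heq =>
    hfresh ht' hl' le_rfl <| heq ▸ hr.touched_mono h01 htt' (hr.down ht'.le he)
      ((hr.step t (hr.down (htt'.trans ht').le he)).touched_fst ht)
  have hinit {t : ℕ} (ht : t < e) (hl : (lab t).2 = none) : (lab t).1 ∉ ({x0, x1} : Set W) :=
    fun hx => hfresh ht hl (Nat.zero_le t)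
      (Or.inl (by simpa [hr.init, initState, or_comm] using hx))
  calc introBotCount lab e ≤ ({x0, x1}ᶜ : Set W).ncard := by
        refine Set.ncard_le_ncard_of_injOn (fun t => (lab t).1) (fun t ht => hinit ht.1 ht.2) ?_
        intro t ht t' ht' heq
        rcases lt_trichotomy t t' with h | h | h
        · exact absurd heq (hne h ht.2 ht'.1 ht'.2)
        · exact h
        · exact absurd heq.symm (hne h ht'.2 ht.1 ht.2)
    _ = Fintype.card W - 2 := by
        rw [Set.ncard_compl, Set.ncard_pair h01.ne.symm, Nat.card_eq_fintype_card]


theorem exists_introBot_between (hr : IsRun G' x0 x1 D seq lab) (h01 : G'.Adj x1 x0)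
    (c : G'.Coloring Bool) (he' : e' ∈ D) (hlt : e < e') (hc : PairContains (lab e) v)
    (hc' : PairContains (lab e') v) (hgap : ∀ t, e < t → t < e' → ¬ PairContains (lab t) v)
    (hvP : v ∈ (seq e).P) : v ∉ (seq e').P ∧ ∃ t, e < t ∧ t < e' ∧ (lab t).2 = none := by
  have he : e ∈ D := hr.down hlt.le he'
  obtain ⟨hl, hv₁, a, ha, hσa⟩ := (hr.step e he).of_mem (hr.invariant h01 he) hc hvP
  obtain ⟨hσ, -, hmem⟩ := hr.frozen hlt he' hgap
  have hv' : v ∉ (seq e').P := fun h => hv₁ (hmem.mp h)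
  refine ⟨hv', ?_⟩
  by_contra! hnone
  obtain ⟨b, hb, hab⟩ := (hr.step e' he').adj_head_of_not_mem (hr.invariant h01 he') hc' hv'
    (hr.touched_mono h01 hlt.le he' (Or.inl hvP))
  rw [hσ, hσa] at hab
  have hhead : (seq e').P.head?.map c = (seq e).P.head?.map c :=
    (hr.map_head_eq h01 c hlt he' hnone).trans <| (hr.step e he).map_head_eq
      (hr.invariant h01 he) c hl (hr.step (e + 1) (hr.down hlt he')).P_ne_nil
  rw [hb, ha] at hhead
  exact c.valid hab (Option.some.inj hhead).symm

theorem mem_of_not_mem (hr : IsRun G' x0 x1 D seq lab) (he' : e' ∈ D) (hlt : e < e')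
    (hc : PairContains (lab e) v) (hgap : ∀ t, e < t → t < e' → ¬ PairContains (lab t) v)
    (hvP : v ∉ (seq e).P) : v ∈ (seq e').P :=
  (hr.frozen hlt he' hgap).2.2.mpr ((hr.step e (hr.down hlt.le he')).mem_of_not_mem hc hvP)

theorem ncard_pairContains_le [Fintype W] (hr : IsRun G' x0 x1 D seq lab)
    (h01 : G'.Adj x1 x0) (c : G'.Coloring Bool) (v : W) :
    {i ∈ D | PairContains (lab i) v}.Finite ∧
      {i ∈ D | PairContains (lab i) v}.ncard ≤ 2 * Fintype.card W := by
  set T := {i ∈ D | PairContains (lab i) v}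
  let F : ℕ → ℕ := fun e => 2 * introBotCount lab e + if v ∈ (seq e).P then 1 else 0
  have hF : StrictMonoOn F T := Nat.strictMonoOn_of_consecutive fun e he e' he' hlt hcons => by
    have hgap (t : ℕ) (ht : e < t) (ht' : t < e') : ¬ PairContains (lab t) v := fun hc => by
      rcases hcons t ⟨hr.down ht'.le he'.1, hc⟩ with h | h <;> omega
    by_cases hvP : v ∈ (seq e).P
    · obtain ⟨hv', t, het, hte', hl⟩ :=
        hr.exists_introBot_between h01 c he'.1 hlt he.2 he'.2 hgap hvP
      have := introBotCount_lt het.le hte' hl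
      simp only [F, hvP, hv', if_true, if_false]
      omega
    · have := introBotCount_mono (lab := lab) hlt.le
      simp only [F, hvP, hr.mem_of_not_mem he'.1 hlt he.2 hgap hvP, if_true, if_false]
      omega
  have hbound : Set.MapsTo F T (Set.Iio (2 * (Fintype.card W - 2) + 2)) := fun e he => by
    have := hr.introBotCount_le h01 he.1
    simp only [F, Set.mem_Iio]
    split_ifs <;> omega
  refine ⟨Set.Finite.of_injOn hbound hF.injOn (Set.finite_Iio _), ?_⟩
  calc T.ncard ≤ (Set.Iio (2 * (Fintype.card W - 2) + 2)).ncard :=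
        Set.ncard_le_ncard_of_injOn F hbound hF.injOn
    _ ≤ 2 * Fintype.card W := by
        have := Fintype.card_pos_iff.mpr ⟨v⟩
        rw [Set.ncard_Iio_nat]; omega

end IsRun

open Classical in
noncomputable def extGraph.bicoloring {V : Type} {G : SimpleGraph V} {V1 V2 : Set V}
    (hdisj : Disjoint V1 V2)
    (hbip : ∀ ⦃u w : V⦄, G.Adj u w → (u ∈ V1 ∧ w ∈ V2) ∨ (u ∈ V2 ∧ w ∈ V1)) :
    (extGraph G V1).Coloring Bool :=
  SimpleGraph.Coloring.mk
    (fun x => match x with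
      | none => false
      | some none => true
      | some (some u) => decide (u ∉ V1))
    (by
      rintro (_ | _ | u) (_ | _ | w) h <;> simp only [extGraph] at h <;> try simp [h]
      rcases hbip h with ⟨hu, hw⟩ | ⟨hu, hw⟩
      · simp [hu, Set.disjoint_right.mp hdisj hw]
      · simp [hw, Set.disjoint_right.mp hdisj hu])

theorem stmt7_general {V : Type} [Fintype V] [DecidableEq V] (G : SimpleGraph V) (V1 V2 : Set V)
    (hdisj : Disjoint V1 V2)
    (hbip : ∀ ⦃u w : V⦄, G.Adj u w → (u ∈ V1 ∧ w ∈ V2) ∨ (u ∈ V2 ∧ w ∈ V1))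
    (D : Set ℕ) (hD : ∀ ⦃i j : ℕ⦄, i ≤ j → j ∈ D → i ∈ D)
    (seq : ℕ → AlgState (Vext V)) (lab : ℕ → Vext V × Option (Vext V))
    (h0 : seq 0 = initState vzero vone)
    (hstep : ∀ i ∈ D, LStep (extGraph G V1) (lab i) (seq i) (seq (i + 1)))
    (v : Vext V) :
    {i ∈ D | PairContains (lab i) v}.Finite ∧
    {i ∈ D | PairContains (lab i) v}.ncard ≤ 2 * Fintype.card (Vext V) :=
  IsRun.ncard_pairContains_le ⟨hD, h0, hstep⟩ trivial (extGraph.bicoloring hdisj hbip) v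

/-- Lemma 2: let `n` be the number of vertices of `G'`.  Consider any (finite or
infinite) execution of the transition system starting from the initial state; the
execution is given by its downward-closed set `D ⊆ ℕ` of step indices, its states
`seq i` and the label `lab i` of the step from `seq i` to `seq (i+1)`.  For a vertex
`v ∈ V'`, the set `S_v` of steps that are a deletion or an introduction of a pair
containing `v` satisfies `|S_v| ≤ 2n`. -/
theorem stmt7 {V : Type} [Fintype V] [DecidableEq V] (G : SimpleGraph V) (V1 V2 : Set V)
    (hcover : V1 ∪ V2 = Set.univ) (hdisj : Disjoint V1 V2)
    (hbip : ∀ ⦃u w : V⦄, G.Adj u w → (u ∈ V1 ∧ w ∈ V2) ∨ (u ∈ V2 ∧ w ∈ V1))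
    (D : Set ℕ) (hD : ∀ ⦃i j : ℕ⦄, i ≤ j → j ∈ D → i ∈ D)
    (seq : ℕ → AlgState (Vext V)) (lab : ℕ → Vext V × Option (Vext V))
    (h0 : seq 0 = initState vzero vone)
    (hstep : ∀ i ∈ D, LStep (extGraph G V1) (lab i) (seq i) (seq (i + 1)))
    (v : Vext V) :
    {i ∈ D | PairContains (lab i) v}.Finite ∧
    {i ∈ D | PairContains (lab i) v}.ncard ≤ 2 * Fintype.card (Vext V) :=
  stmt7_general G V1 V2 hdisj hbip D hD seq lab h0 hstep v
end

section
/- Let n be the number of vertices of G'. Every execution of the transition system starting from the initial state performs at most 2n² + 1 steps; in particular every execution is finite and the algorithm terminates after O(n²) iterations. -/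
/-!
The proof is a potential argument.  Fix a proper 2-colouring of `G'` and call a vertex
*fresh* if it is off the path with `σ = τ = ⊥`, and *available* if it is off the path with
`σ = ⊥ ≠ τ` and its colour differs from that of the last vertex of the path.  Off the path
`τ x = y` forces `σ y = x`, so with `F` the fresh and `A` the available vertices,
`2|A| + |F| + |P| ≤ n`.  The potential `2n|F| + 4|A| + |P|` then drops at every step: a
deletion shortens the path by two without changing the colour of its last vertex; an
introduction of a fresh vertex pays with `2n` for whatever happens to `A`; an introduction of
a pair `(z, w)` makes `z` unavailable and keeps the colour of the last vertex.  It is at most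
`2n² + 2` initially and at least `2` whenever a step is possible.
-/

open Finset

theorem SimpleGraph.Coloring.bool_eq_of_adj_of_adj_s8 {V : Type} {G : SimpleGraph V}
    (c : G.Coloring Bool) {u v w : V} (huv : G.Adj u v) (hvw : G.Adj v w) : c w = c u := by
  have h1 := c.valid huv
  have h2 := c.valid hvw
  revert h1 h2
  cases c u <;> cases c v <;> cases c w <;> decide

namespace AlgState

section Invariant

variable {W : Type} {G' : SimpleGraph W}

structure Inv (G' : SimpleGraph W) (s : AlgState W) : Prop where
  isChain : s.P.IsChain G'.Adj
  nodup : s.P.Nodup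
  adj_of_τ : ∀ x y, s.τ x = some y → G'.Adj x y
  σ_of_τ : ∀ x ∉ s.P, ∀ y, s.τ x = some y → y ∉ s.P ∧ s.σ y = some x

lemma inv_initState {x₀ x₁ : W} (h : G'.Adj x₁ x₀) : Inv G' (initState x₀ x₁) where
  isChain := List.isChain_pair.mpr h
  nodup := List.nodup_cons.mpr ⟨by simpa using h.ne, List.nodup_singleton _⟩
  adj_of_τ := by simp [initState]
  σ_of_τ := by simp [initState]

lemma Inv.cons {P : List W} {R R' : Set W} {σ τ : W → Option W} {z : W}
    (h : Inv G' ⟨P, R, σ, τ⟩) (hz : z ∉ P) (hchain : (z :: P).IsChain G'.Adj)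
    (hσz : ∀ x, σ z = some x → x ∈ P) : Inv G' ⟨z :: P, R', σ, τ⟩ where
  isChain := hchain
  nodup := List.nodup_cons.mpr ⟨hz, h.nodup⟩
  adj_of_τ := h.adj_of_τ
  σ_of_τ x hx y hxy := by
    simp only [List.mem_cons, not_or] at hx ⊢
    obtain ⟨hyP, hσy⟩ := h.σ_of_τ x hx.2 y hxy
    refine ⟨⟨?_, hyP⟩, hσy⟩
    rintro rfl
    exact hx.2 (hσz x hσy)

variable [DecidableEq W]

lemma Inv.del {vk vk1 : W} {rest : List W} {R : Set W} {σ τ : W → Option W}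
    (h : Inv G' ⟨vk :: vk1 :: rest, R, σ, τ⟩) :
    Inv G' ⟨rest, R,
      Function.update (Function.update σ vk1 (some vk)) vk none,
      Function.update (Function.update τ vk (some vk1)) vk1 none⟩ := by
  obtain ⟨hchain, hnodup, hadj, hστ⟩ := h
  have hvk : G'.Adj vk vk1 := (List.isChain_cons_cons.mp hchain).1
  simp only [List.nodup_cons, List.mem_cons, not_or] at hnodup
  refine ⟨hchain.tail.tail, hnodup.2.2, fun x y hxy => ?_, fun x hx y hxy => ?_⟩
  · simp only [Function.update_apply] at hxy
    split_ifs at hxy with h1 h2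
    · cases hxy
      rw [h2]
      exact hvk
    · exact hadj x y hxy
  · simp only [Function.update_apply] at hxy ⊢
    split_ifs at hxy with h1 h2
    · cases hxy
      simp [h2, hvk.ne.symm, hnodup.2.1]
    · obtain ⟨hyP, hσy⟩ := hστ x (by simp [h1, h2, hx]) y hxy
      simp only [List.mem_cons, not_or] at hyP hσy
      simp [hyP, hσy]

lemma Inv.lStep {l : W × Option W} {s s' : AlgState W} (h : Inv G' s)
    (hstep : LStep G' l s s') : Inv G' s' := by
  cases hstep with
  | del => exact h.del
  | intro_bot vk rest R σ τ z _ hz hadj hσz =>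
    exact h.cons hz (List.isChain_cons_cons.mpr ⟨hadj, h.isChain⟩) (by simp [hσz])
  | intro_pair vk rest R σ τ z w _ hz hadj hσz hτz =>
    obtain ⟨hw, hσw⟩ := h.σ_of_τ z hz w hτz
    simp only at hw hσw
    have hzw : G'.Adj z w := h.adj_of_τ z w hτz
    have hz' : Inv G' ⟨z :: vk :: rest, insert z R, σ, τ⟩ :=
      h.cons hz (List.isChain_cons_cons.mpr ⟨hadj, h.isChain⟩) (by simp [hσz])
    refine hz'.cons (by simp [hzw.ne.symm, hw]) ?_ (by simp [hσw])
    exact List.isChain_cons_cons.mpr ⟨hzw.symm, hz'.isChain⟩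

lemma two_le_length_of_lStep {l : W × Option W} {s s' : AlgState W} (h : LStep G' l s s') :
    2 ≤ s.P.length := by
  cases h with
  | del => simp
  | intro_bot _ rest _ _ _ _ hrest | intro_pair _ rest _ _ _ _ _ hrest =>
    simpa [Nat.one_le_iff_ne_zero] using hrest

end Invariant

section Potential

variable {W : Type} [Fintype W] [DecidableEq W]

def fresh (s : AlgState W) : Finset W :=
  {u | u ∉ s.P ∧ s.σ u = none ∧ s.τ u = none}

def avail (c : W → Bool) (s : AlgState W) : Finset W :=
  {u | u ∉ s.P ∧ s.σ u = none ∧ s.τ u ≠ none ∧ s.P.head?.map c ≠ some (c u)}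

def potential (c : W → Bool) (s : AlgState W) : ℕ :=
  2 * Fintype.card W * #s.fresh + 4 * #(s.avail c) + s.P.length

lemma two_mul_card_avail_add_card_fresh_add_length_le {G' : SimpleGraph W} (c : W → Bool)
    {s : AlgState W} (h : Inv G' s) :
    2 * #(s.avail c) + #s.fresh + s.P.length ≤ Fintype.card W := by
  set partner : W → W := fun u => (s.τ u).getD u
  have hpartner : ∀ u ∈ s.avail c, partner u ∉ s.P ∧ s.σ (partner u) = some u := by
    intro u hu
    simp only [avail, mem_filter, mem_univ, true_and] at hu
    obtain ⟨w, hw⟩ := Option.ne_none_iff_exists'.mp hu.2.2.1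
    simpa [partner, hw] using h.σ_of_τ u hu.1 w hw
  have hinj : Set.InjOn partner (s.avail c) := fun a ha b hb hab => by
    simpa [hab, (hpartner b hb).2] using ((hpartner a ha).2).symm
  have hAF : Disjoint (s.avail c) s.fresh := by
    simp +contextual [disjoint_left, avail, fresh]
  have hBAF : Disjoint ((s.avail c).image partner) (s.avail c ∪ s.fresh) := by
    simp only [disjoint_left, mem_image, forall_exists_index, and_imp, forall_apply_eq_imp_iff₂]
    intro u hu
    simp [avail, fresh, (hpartner u hu).2]
  have hP : Disjoint ((s.avail c).image partner ∪ (s.avail c ∪ s.fresh)) s.P.toFinset := by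
    simp only [disjoint_left, mem_union, mem_image, List.mem_toFinset]
    rintro _ (⟨u, hu, rfl⟩ | hu | hu)
    · exact (hpartner u hu).1
    all_goals simp_all [avail, fresh]
  have := card_le_univ ((s.avail c).image partner ∪ (s.avail c ∪ s.fresh) ∪ s.P.toFinset)
  rw [card_union_of_disjoint hP, card_union_of_disjoint hBAF, card_union_of_disjoint hAF,
    card_image_of_injOn hinj, List.toFinset_card_of_nodup h.nodup] at this
  omega

lemma fresh_subset_fresh {P Q : List W} {R R' : Set W} {σ τ : W → Option W} (h : P ⊆ Q) :
    fresh ⟨Q, R', σ, τ⟩ ⊆ fresh ⟨P, R, σ, τ⟩ := by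
  intro u
  simp only [fresh, mem_filter, mem_univ, true_and]
  exact fun ⟨hu, hσ, hτ⟩ => ⟨fun huP => hu (h huP), hσ, hτ⟩

lemma avail_subset_avail (c : W → Bool) {P Q : List W} {R R' : Set W} {σ τ : W → Option W}
    (h : P ⊆ Q) (hc : Q.head?.map c = P.head?.map c) :
    avail c ⟨Q, R', σ, τ⟩ ⊆ avail c ⟨P, R, σ, τ⟩ := by
  intro u
  simp only [avail, mem_filter, mem_univ, true_and, hc]
  exact fun ⟨hu, hσ, hτ, hcu⟩ => ⟨fun huP => hu (h huP), hσ, hτ, hcu⟩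

lemma potential_cons_fresh_lt {G' : SimpleGraph W} (c : W → Bool) {P : List W}
    {R R' : Set W} {σ τ : W → Option W} {z : W} (h : Inv G' ⟨z :: P, R', σ, τ⟩)
    (hz : z ∉ P) (hσz : σ z = none) (hτz : τ z = none) :
    potential c ⟨z :: P, R', σ, τ⟩ < potential c ⟨P, R, σ, τ⟩ := by
  have hF : fresh ⟨z :: P, R', σ, τ⟩ ⊂ fresh ⟨P, R, σ, τ⟩ := by
    refine (ssubset_iff_of_subset (fresh_subset_fresh (List.subset_cons_self z P))).mpr
      ⟨z, ?_, ?_⟩ <;> simp [fresh, hz, hσz, hτz]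
  have hmul := Nat.mul_le_mul_left (2 * Fintype.card W) (card_lt_card hF)
  have hbound := two_mul_card_avail_add_card_fresh_add_length_le c h
  rw [Nat.mul_succ] at hmul
  simp only [potential, List.length_cons] at hbound ⊢
  omega

lemma potential_initState_le (c : W → Bool) (x₀ x₁ : W) :
    potential c (initState x₀ x₁) ≤ 2 * Fintype.card W ^ 2 + 2 := by
  have havail : (initState x₀ x₁).avail c = ∅ := by simp [avail, initState]
  have := Nat.mul_le_mul_left (2 * Fintype.card W) (card_le_univ (initState x₀ x₁).fresh)
  have hlength : (initState x₀ x₁).P.length = 2 := rfl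
  simp only [potential, havail, card_empty, hlength]
  nlinarith

variable {G' : SimpleGraph W} (c : G'.Coloring Bool)

lemma potential_del_lt {vk vk1 hd : W} {rest : List W} {R : Set W} {σ τ : W → Option W}
    (h : Inv G' ⟨vk :: vk1 :: hd :: rest, R, σ, τ⟩) :
    potential c ⟨hd :: rest, R,
      Function.update (Function.update σ vk1 (some vk)) vk none,
      Function.update (Function.update τ vk (some vk1)) vk1 none⟩ <
    potential c ⟨vk :: vk1 :: hd :: rest, R, σ, τ⟩ := by
  obtain ⟨h01, h12, -⟩ :=
    List.isChain_cons_cons.mp h.isChain |>.imp_right List.isChain_cons_cons.mp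
  have hcol : c hd = c vk := c.bool_eq_of_adj_of_adj_s8 h01 h12
  have hF : fresh ⟨hd :: rest, R,
      Function.update (Function.update σ vk1 (some vk)) vk none,
      Function.update (Function.update τ vk (some vk1)) vk1 none⟩ ⊆
      fresh ⟨vk :: vk1 :: hd :: rest, R, σ, τ⟩ := by
    intro u
    simp only [fresh, mem_filter, mem_univ, true_and, List.mem_cons, not_or,
      Function.update_apply]
    split_ifs <;> simp_all
  have hA : avail c ⟨hd :: rest, R,
      Function.update (Function.update σ vk1 (some vk)) vk none,
      Function.update (Function.update τ vk (some vk1)) vk1 none⟩ ⊆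
      avail c ⟨vk :: vk1 :: hd :: rest, R, σ, τ⟩ := by
    intro u
    simp only [avail, mem_filter, mem_univ, true_and, List.mem_cons, not_or,
      Function.update_apply, List.head?_cons, Option.map_some, hcol]
    split_ifs <;> simp_all
  have := Nat.mul_le_mul_left (2 * Fintype.card W) (card_le_card hF)
  have := card_le_card hA
  simp only [potential, List.length_cons]
  omega

lemma potential_cons_pair_lt {vk z w : W} {rest : List W} {R : Set W}
    {σ τ : W → Option W} (h : Inv G' ⟨vk :: rest, R, σ, τ⟩) (hz : z ∉ vk :: rest)
    (hadj : G'.Adj z vk) (hσz : σ z = none) (hτz : τ z = some w) :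
    potential c ⟨w :: z :: vk :: rest, insert z R, σ, τ⟩ <
      potential c ⟨vk :: rest, R, σ, τ⟩ := by
  have hcol : c w = c vk := c.bool_eq_of_adj_of_adj_s8 hadj.symm (h.adj_of_τ z w hτz)
  have hF := fresh_subset_fresh (R := R) (R' := insert z R) (σ := σ) (τ := τ)
    (by grind : vk :: rest ⊆ w :: z :: vk :: rest)
  have hA :
      avail c ⟨w :: z :: vk :: rest, insert z R, σ, τ⟩ ⊂ avail c ⟨vk :: rest, R, σ, τ⟩ := by
    refine (ssubset_iff_of_subset (avail_subset_avail c (by grind) (by simp [hcol]))).mpr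
      ⟨z, ?_, ?_⟩ <;> simp_all [avail, (c.valid hadj).symm]
  have := Nat.mul_le_mul_left (2 * Fintype.card W) (card_le_card hF)
  have := card_lt_card hA
  simp only [potential, List.length_cons]
  omega

lemma potential_lt_of_lStep {l : W × Option W} {s s' : AlgState W} (hs : Inv G' s)
    (h : LStep G' l s s') (h' : 2 ≤ s'.P.length) : potential c s' < potential c s := by
  have hs' := hs.lStep h
  cases h with
  | del _ _ rest =>
    obtain ⟨hd, rest, rfl⟩ : ∃ hd rest', rest = hd :: rest' :=
      List.exists_cons_of_ne_nil (by rintro rfl; simp at h')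
    exact potential_del_lt c hs
  | intro_bot _ _ _ _ _ _ _ hz _ hσz hτz =>
    exact potential_cons_fresh_lt c hs' hz hσz hτz
  | intro_pair _ _ _ _ _ _ _ _ hz hadj hσz hτz =>
    exact potential_cons_pair_lt c hs hz hadj hσz hτz

end Potential

end AlgState

open AlgState in
theorem ncard_le_of_execution {W : Type} [Fintype W] [DecidableEq W] {G' : SimpleGraph W}
    (c : G'.Coloring Bool) {x₀ x₁ : W} (h₀₁ : G'.Adj x₁ x₀) {D : Set ℕ}
    (hD : ∀ ⦃i j : ℕ⦄, i ≤ j → j ∈ D → i ∈ D) {seq : ℕ → AlgState W}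
    (h0 : seq 0 = initState x₀ x₁) (hstep : ∀ i ∈ D, Step G' (seq i) (seq (i + 1))) :
    D.Finite ∧ D.ncard ≤ 2 * Fintype.card W ^ 2 + 1 := by
  have hdescent :
      ∀ i ∈ D, Inv G' (seq i) ∧ potential c (seq i) + i ≤ potential c (seq 0) := by
    intro i
    induction i with
    | zero => exact fun _ => ⟨h0 ▸ inv_initState h₀₁, le_rfl⟩
    | succ i ih =>
      intro hi
      obtain ⟨hinv, hpot⟩ := ih (hD i.le_succ hi)
      obtain ⟨_, hl⟩ := hstep i (hD i.le_succ hi)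
      obtain ⟨_, hl'⟩ := hstep (i + 1) hi
      have := potential_lt_of_lStep c hinv hl (two_le_length_of_lStep hl')
      exact ⟨hinv.lStep hl, by omega⟩
  have hlt : ∀ i ∈ D, i < 2 * Fintype.card W ^ 2 + 1 := by
    intro i hi
    obtain ⟨_, hl⟩ := hstep i hi
    have := two_le_length_of_lStep hl
    have := (hdescent i hi).2
    have := potential_initState_le c x₀ x₁
    have : (seq i).P.length ≤ potential c (seq i) := Nat.le_add_left _ _
    rw [h0] at *
    omega
  have hsub : D ⊆ ↑(range (2 * Fintype.card W ^ 2 + 1)) := fun i hi => by simpa using hlt i hi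
  exact ⟨(finite_toSet _).subset hsub,
    (Set.ncard_le_ncard hsub (finite_toSet _)).trans (by simp)⟩

open Classical in
noncomputable def extGraphColoring {V : Type} {G : SimpleGraph V} {V1 V2 : Set V}
    (hdisj : Disjoint V1 V2)
    (hbip : ∀ ⦃u w : V⦄, G.Adj u w → (u ∈ V1 ∧ w ∈ V2) ∨ (u ∈ V2 ∧ w ∈ V1)) :
    (extGraph G V1).Coloring Bool :=
  .mk (fun | none => false | some none => true | some (some v) => v ∉ V1) <| by
    rintro (_ | _ | u) (_ | _ | v) h <;> simp only [extGraph] at h <;> simp [h]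
    rcases hbip h with ⟨hu, hv⟩ | ⟨hu, hv⟩
    · simp [hu, hdisj.notMem_of_mem_right hv]
    · simp [hv, hdisj.notMem_of_mem_right hu]

theorem stmt8_general {V : Type} [Fintype V] [DecidableEq V] (G : SimpleGraph V) (V1 V2 : Set V)
    (hdisj : Disjoint V1 V2)
    (hbip : ∀ ⦃u w : V⦄, G.Adj u w → (u ∈ V1 ∧ w ∈ V2) ∨ (u ∈ V2 ∧ w ∈ V1))
    (D : Set ℕ) (hD : ∀ ⦃i j : ℕ⦄, i ≤ j → j ∈ D → i ∈ D)
    (seq : ℕ → AlgState (Vext V))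
    (h0 : seq 0 = initState vzero vone)
    (hstep : ∀ i ∈ D, Step (extGraph G V1) (seq i) (seq (i + 1))) :
    D.Finite ∧ D.ncard ≤ 2 * Fintype.card (Vext V) ^ 2 + 1 :=
  ncard_le_of_execution (extGraphColoring hdisj hbip) (x₀ := vzero) (x₁ := vone) trivial
    hD h0 hstep

/-- Proposition 4 (upper bound): let `n` be the number of vertices of `G'`.  Every
execution of the transition system starting from the initial state — given by its
downward-closed set `D ⊆ ℕ` of step indices — performs at most `2n² + 1` steps; in
particular every execution is finite and the algorithm terminates after `O(n²)`
iterations. -/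
theorem stmt8 {V : Type} [Fintype V] [DecidableEq V] (G : SimpleGraph V) (V1 V2 : Set V)
    (hcover : V1 ∪ V2 = Set.univ) (hdisj : Disjoint V1 V2)
    (hbip : ∀ ⦃u w : V⦄, G.Adj u w → (u ∈ V1 ∧ w ∈ V2) ∨ (u ∈ V2 ∧ w ∈ V1))
    (D : Set ℕ) (hD : ∀ ⦃i j : ℕ⦄, i ≤ j → j ∈ D → i ∈ D)
    (seq : ℕ → AlgState (Vext V))
    (h0 : seq 0 = initState vzero vone)
    (hstep : ∀ i ∈ D, Step (extGraph G V1) (seq i) (seq (i + 1))) :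
    D.Finite ∧ D.ncard ≤ 2 * Fintype.card (Vext V) ^ 2 + 1 :=
  stmt8_general G V1 V2 hdisj hbip D hD seq h0 hstep
end
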